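/- arXiv:2212.14501 — 2 statements merged into one kernel-verified Lean document; each statement's English description precedes it below -/
import Mathlib

section
/- All coefficients d_i(m) of the Boros-Moll polynomial P_m(x) are positive for 0 ≤ i ≤ m. -/
open Finset

/-- Coefficients of the Boros-Moll polynomial. -/
noncomputable def bmD (m i : ℕ) : ℝ :=
  (1 / 4 ^ m) * ∑ k ∈ Finset.Icc i m,
    (2 : ℝ) ^ k * ((2 * m - 2 * k).choose (m - k)) * ((m + k).choose k) * (k.choose i)

theorem boros_moll_coeff_pos (m i : ℕ) (h : i ≤ m) : 0 < bmD m i := by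
  unfold bmD
  apply mul_pos (by positivity)
  apply Finset.sum_pos'
  · intro k _
    positivity
  · refine ⟨m, Finset.mem_Icc.mpr ⟨h, le_rfl⟩, ?_⟩
    have h1 : 0 < ((2 * m - 2 * m).choose (m - m) : ℝ) := by simp
    have h2 : 0 < (((m + m).choose m : ℕ) : ℝ) := by
      exact_mod_cast Nat.choose_pos (by omega)
    have h3 : 0 < ((m.choose i : ℕ) : ℝ) := by
      exact_mod_cast Nat.choose_pos h
    positivity
end

section
/- The polynomials Q_m(x) = 2^m m! x^m P_m(1/x) satisfy the differential recurrence Q_{m+1}(x) = (2m+1)(2+3x) Q_m(x) − 2x(1+x) Q_m'(x), with Q_0(x) = 1. -/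
open Polynomial Finset

/-- `c_i(m) = 2^m m! d_{m-i}(m)`. -/
noncomputable def bmC (m i : ℕ) : ℝ := (2 : ℝ) ^ m * (Nat.factorial m) * bmD m (m - i)

/-- `Q_m(x) = 2^m m! x^m P_m(1/x) = ∑_{i=0}^m c_i(m) x^i`. -/
noncomputable def bmQ (m : ℕ) : Polynomial ℝ :=
  ∑ i ∈ Finset.range (m + 1), Polynomial.C (bmC m i) * Polynomial.X ^ i

/-!
In the basis `X ^ a * (X + 1) ^ b` one has `Q_m = ∑_{a+b=m} bmS a b • X^a (X+1)^b` with
`bmS a b = (2a)! (a+2b)! / (2^a a!² b!)`: summing over `i` first in the definition of `d_i(m)`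
gives the classical expansion `P_m(x) = 2^{-2m} ∑_k 2^k C(2m-2k,m-k) C(m+k,k) (x+1)^k`, and `Q_m`
is its reversal. The right-hand side `bmOp m` of the recurrence sends `X^a (X+1)^b` with
`a + b = m` to `(2a+4b+2) X^a (X+1)^(b+1) + (2a+1) X^(a+1) (X+1)^b`, so the recurrence reduces to
a Pascal-type recurrence for `bmS`, which is an identity between factorials.
-/

open scoped Nat

theorem Finset.Nat.sum_antidiagonal_succ_eq_of_pascal {M : Type*} [AddCommMonoid M]
    (u v w : ℕ → ℕ → M) (m : ℕ) (h_left : ∀ b, w 0 (b + 1) = u 0 b)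
    (h_right : ∀ a, w (a + 1) 0 = v a 0)
    (h_inner : ∀ a b, w (a + 1) (b + 1) = u (a + 1) b + v a (b + 1)) :
    ∑ p ∈ antidiagonal (m + 1), w p.1 p.2 = ∑ p ∈ antidiagonal m, (u p.1 p.2 + v p.1 p.2) := by
  have hw : ∀ p ∈ antidiagonal (m + 1), w p.1 p.2 =
      (if p.2 = 0 then 0 else u p.1 (p.2 - 1)) + (if p.1 = 0 then 0 else v (p.1 - 1) p.2) := by
    rintro ⟨_ | a, _ | b⟩ hp <;> simp_all
  rw [sum_congr rfl hw, sum_add_distrib, sum_add_distrib, Nat.sum_antidiagonal_succ',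
    Nat.sum_antidiagonal_succ]
  simp

theorem Polynomial.mul_derivative_pow {R : Type*} [CommSemiring R] (p : R[X]) (n : ℕ) :
    p * derivative (p ^ n) = (n : R[X]) * p ^ n * derivative p := by
  rw [derivative_pow, C_eq_natCast]
  cases n with
  | zero => simp
  | succ n => rw [Nat.add_sub_cancel, pow_succ]; ring

noncomputable def bmS (a b : ℕ) : ℝ := (2 * a)! * (a + 2 * b)! / (2 ^ a * a ! ^ 2 * b !)

theorem bmS_zero_succ (b : ℕ) : bmS 0 (b + 1) = (4 * b + 2) * bmS 0 b := by
  simp only [bmS, mul_zero, zero_add, show 2 * (b + 1) = 2 * b + 1 + 1 by ring,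
    Nat.factorial_succ]
  push_cast
  field_simp
  ring

theorem bmS_succ_zero (a : ℕ) : bmS (a + 1) 0 = (2 * a + 1) * bmS a 0 := by
  simp only [bmS, mul_zero, add_zero, show 2 * (a + 1) = 2 * a + 1 + 1 by ring,
    Nat.factorial_succ]
  push_cast
  field_simp
  ring

theorem bmS_succ_succ (a b : ℕ) :
    bmS (a + 1) (b + 1) = (2 * a + 4 * b + 4) * bmS (a + 1) b + (2 * a + 1) * bmS a (b + 1) := by
  simp only [bmS, show 2 * (a + 1) = 2 * a + 1 + 1 by ring,
    show a + 1 + 2 * (b + 1) = a + 2 * b + 1 + 1 + 1 by ring,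
    show a + 1 + 2 * b = a + 2 * b + 1 by ring,
    show a + 2 * (b + 1) = a + 2 * b + 1 + 1 by ring, Nat.factorial_succ]
  push_cast
  field_simp
  ring

theorem bmD_summand_eq_bmS (m k : ℕ) (hk : k ≤ m) :
    2 ^ m * m ! / 4 ^ m * (2 ^ k * ((2 * m - 2 * k).choose (m - k)) * ((m + k).choose k))
      = bmS (m - k) k := by
  obtain ⟨a, rfl⟩ : ∃ a, m = a + k := ⟨m - k, by omega⟩
  rw [show 2 * (a + k) - 2 * k = 2 * a by omega, Nat.add_sub_cancel,
    show a + k + k = a + 2 * k by ring, Nat.cast_choose ℝ (by omega : a ≤ 2 * a),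
    Nat.cast_choose ℝ (by omega : k ≤ a + 2 * k), show 2 * a - a = a by omega,
    show a + 2 * k - k = a + k by omega, bmS,
    show (4 : ℝ) ^ (a + k) = 2 ^ (a + k) * 2 ^ (a + k) by rw [← mul_pow]; norm_num]
  field_simp
  ring

theorem bmQ_eq_sum_antidiagonal (m : ℕ) :
    bmQ m = ∑ p ∈ antidiagonal m, bmS p.1 p.2 • (X ^ p.1 * (X + 1) ^ p.2) := by
  rw [← Nat.sum_antidiagonal_swap]
  simp only [Prod.fst_swap, Prod.snd_swap]
  rw [Nat.sum_antidiagonal_eq_sum_range_succ (fun b a => bmS a b • (X ^ a * (X + 1) ^ b))]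
  calc bmQ m = ∑ j ∈ range (m + 1), C (bmC m (m - j)) * X ^ (m - j) := by
        rw [bmQ, ← sum_range_reflect]
        simp only [add_tsub_cancel_right]
    _ = ∑ j ∈ range (m + 1), ∑ k ∈ Ico j (m + 1), (bmS (m - k) k * k.choose j) • X ^ (m - j) := by
        refine sum_congr rfl fun j hj => ?_
        rw [bmC, Nat.sub_sub_self (by simp at hj; omega), bmD, ← Ico_add_one_right_eq_Icc,
          ← smul_eq_C_mul, mul_sum, mul_sum, sum_smul]
        refine sum_congr rfl fun k hk => ?_
        rw [← bmD_summand_eq_bmS m k (by simp at hk; omega)]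
        congr 1
        ring
    _ = ∑ k ∈ range (m + 1), ∑ j ∈ range (k + 1), (bmS (m - k) k * k.choose j) • X ^ (m - j) := by
        simp only [range_eq_Ico, sum_Ico_Ico_comm]
    _ = _ := by
        refine sum_congr rfl fun k hk => ?_
        rw [add_comm X, add_pow, mul_sum, smul_sum]
        refine sum_congr rfl fun j hj => ?_
        rw [show m - j = m - k + (k - j) by simp at hk hj; omega]
        simp only [smul_eq_C_mul, map_mul, C_eq_natCast, pow_add, one_pow]
        ring

noncomputable def bmOp (m : ℕ) : ℝ[X] →ₗ[ℝ] ℝ[X] :=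
  LinearMap.mulLeft ℝ ((2 * (m : ℝ[X]) + 1) * (2 + 3 * X)) -
    LinearMap.mulLeft ℝ (2 * X * (1 + X)) ∘ₗ derivative

theorem bmOp_X_pow_mul_X_add_one_pow (a b : ℕ) :
    bmOp (a + b) (X ^ a * (X + 1) ^ b) =
      (2 * a + 4 * b + 2 : ℝ) • (X ^ a * (X + 1) ^ (b + 1)) +
        (2 * a + 1 : ℝ) • (X ^ (a + 1) * (X + 1) ^ b) := by
  have hX := mul_derivative_pow (X : ℝ[X]) a
  have hX1 := mul_derivative_pow (X + 1 : ℝ[X]) b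
  simp only [derivative_X, derivative_add, derivative_one, add_zero, mul_one] at hX hX1
  simp only [bmOp, LinearMap.sub_apply, LinearMap.comp_apply, LinearMap.mulLeft_apply,
    derivative_mul, smul_eq_C_mul, map_add, map_mul, map_natCast, map_ofNat, map_one]
  push_cast
  linear_combination (-2 * (1 + X) * (X + 1) ^ b) * hX + (-2 * X * X ^ a) * hX1

theorem bmQ_recurrence :
    bmQ 0 = 1 ∧
    ∀ m : ℕ, bmQ (m + 1) =
      (2 * (m : Polynomial ℝ) + 1) * (2 + 3 * Polynomial.X) * bmQ m
        - 2 * Polynomial.X * (1 + Polynomial.X) * Polynomial.derivative (bmQ m) := by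
  refine ⟨by simp [bmQ, bmC, bmD], fun m => ?_⟩
  change bmQ (m + 1) = bmOp m (bmQ m)
  rw [bmQ_eq_sum_antidiagonal, bmQ_eq_sum_antidiagonal, map_sum]
  refine (Nat.sum_antidiagonal_succ_eq_of_pascal
    (fun a b => (bmS a b * (2 * a + 4 * b + 2)) • (X ^ a * (X + 1) ^ (b + 1)))
    (fun a b => (bmS a b * (2 * a + 1)) • (X ^ (a + 1) * (X + 1) ^ b))
    (fun a b => bmS a b • (X ^ a * (X + 1) ^ b)) m ?_ ?_ ?_).trans (sum_congr rfl ?_)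
  · intro b
    rw [bmS_zero_succ]
    congr 1
    push_cast
    ring
  · intro a
    rw [bmS_succ_zero]
    congr 1
    ring
  · intro a b
    rw [← add_smul, bmS_succ_succ]
    congr 1
    push_cast
    ring
  · rintro ⟨a, b⟩ hab
    rw [HasAntidiagonal.mem_antidiagonal] at hab
    subst hab
    rw [map_smul, bmOp_X_pow_mul_X_add_one_pow, smul_add, smul_smul, smul_smul]
end
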